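/- arXiv:2605.06262 — 6 statements merged into one kernel-verified Lean document; each statement's English description precedes it below -/
import Mathlib

section
/- If a QBF Φ = Q.φ contains no tautological clauses, u is a universal variable of Φ, and no clause of φ contains both u and an existential variable x with u ≼_D x (for a dependency poset D), then Φ is true if and only if the QBF obtained by deleting u from the prefix and replacing φ by red(φ,u) = {C \ {u, ¬u} : C ∈ φ} is true. -/
noncomputable section
attribute [local instance] Classical.propDecidable

/-- A literal is a variable with a polarity; a clause is a finite set of literals. -/
abbrev Clause (V : Type) := Finset (V × Bool)

/-- A CNF matrix is a finite set of clauses. -/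
abbrev CNF (V : Type) := Finset (Clause V)

variable {V : Type}

/-- A clause is tautological if it contains some variable in both polarities. -/
def Tauto (C : Clause V) : Prop := ∃ v : V, (v, true) ∈ C ∧ (v, false) ∈ C

/-- A variable occurs in a clause. -/
def varIn (v : V) (C : Clause V) : Prop := ∃ b : Bool, (v, b) ∈ C

def clauseSat (α : V → Bool) (C : Clause V) : Prop := ∃ l ∈ C, α l.1 = l.2

def cnfSat (α : V → Bool) (φ : CNF V) : Prop := ∀ C ∈ φ, clauseSat α C

/-- Truth of the QBF with existential variables `E`, universal variables `U`,
dependency relation `D` and matrix `φ`: there is a winning existential strategy,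
i.e. a choice function for every existential variable that depends only on the
universal variables it depends on (w.r.t. `D`), winning against every universal
assignment. -/
def QBFTrue (E U : Finset V) (D : V → V → Prop) (φ : CNF V) : Prop :=
  ∃ τ : V → (V → Bool) → Bool,
    (∀ x ∈ E, ∀ β β' : V → Bool, (∀ u ∈ U, D u x → β u = β' u) → τ x β = τ x β') ∧
    ∀ β : V → Bool, cnfSat (fun w => if w ∈ E then τ w β else β w) φ

/-- The clauses of `φ` containing the literal `x`. -/
def posCl (φ : CNF V) (x : V) : CNF V := φ.filter (fun C => (x, true) ∈ C)

/-- The clauses of `φ` containing the literal `¬x`. -/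
def negCl (φ : CNF V) (x : V) : CNF V := φ.filter (fun C => (x, false) ∈ C)

/-- `R(φ,x)`: all non-tautological resolvents `(C₁ \ {x}) ∪ (C₂ \ {¬x})` with
`C₁ ∈ φ_x` and `C₂ ∈ φ_{¬x}`. -/
def resolvents (φ : CNF V) (x : V) : CNF V :=
  ((posCl φ x ×ˢ negCl φ x).image
    (fun p => p.1.erase (x, true) ∪ p.2.erase (x, false))).filter (fun C => ¬ Tauto C)

/-- Resolution over `x` in `φ`. -/
def res (φ : CNF V) (x : V) : CNF V := (φ \ (posCl φ x ∪ negCl φ x)) ∪ resolvents φ x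

/-- Reduction of `u` from `φ`: delete both literals of `u` from every clause. -/
def red (φ : CNF V) (u : V) : CNF V :=
  φ.image (fun C => (C.erase (u, true)).erase (u, false))

/-- Restrict `φ` by the assignment `δ` on the variable set `S`: remove clauses
satisfied on `S` and delete falsified literals over `S`. -/
def restrict (φ : CNF V) (S : Finset V) (δ : V → Bool) : CNF V :=
  (φ.filter (fun C => ¬ ∃ l ∈ C, l.1 ∈ S ∧ δ l.1 = l.2)).image
    (fun C => C.filter (fun l => l.1 ∉ S))

/-- The combined assignment `(β, τ)`. -/
def combined (E : Finset V) (τ : V → (V → Bool) → Bool) (β : V → Bool) : V → Bool :=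
  fun w => if w ∈ E then τ w β else β w

/-- An existential strategy is valid if each `τ x` for existential `x` depends only on
the universal variables that `x` depends on. -/
def strategyValid (E U : Finset V) (D : V → V → Prop) (τ : V → (V → Bool) → Bool) : Prop :=
  ∀ x ∈ E, ∀ β β' : V → Bool, (∀ w ∈ U, D w x → β w = β' w) → τ x β = τ x β'

/-- Primal-graph adjacency: two distinct variables co-occur in some clause of `φ`. -/
def primalAdj (φ : CNF V) (a b : V) : Prop :=
  a ≠ b ∧ ∃ C ∈ φ, varIn a C ∧ varIn b C

/-- correctness of reduction: if the QBF `Q.φ` contains no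
tautological clauses, `u` is universal, and no clause of `φ` contains both `u` and an
existential variable `x` with `u ≼_D x`, then `Q.φ` is true iff the QBF obtained by
deleting `u` from the prefix and replacing `φ` by `red φ u` is true. -/
theorem stmt2 {V : Type} (E U : Finset V) (hdisj : Disjoint E U)
    (D : V → V → Prop) (hpo : IsPartialOrder V D)
    (φ : CNF V) (hvars : ∀ C ∈ φ, ∀ l ∈ C, l.1 ∈ E ∪ U)
    (u : V) (hu : u ∈ U)
    (hnt : ∀ C ∈ φ, ¬ Tauto C)
    (hblock : ∀ x ∈ E, D u x → ∀ C ∈ φ, ¬ (varIn u C ∧ varIn x C)) :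
    QBFTrue E U D φ ↔ QBFTrue E (U.erase u) D (red φ u) := by
  classical
  have huE : u ∉ E := fun h => (Finset.disjoint_left.mp hdisj h) hu
  constructor
  · rintro ⟨τ, hval, hsat⟩
    refine ⟨fun x γ => τ x (Function.update γ u false), ?_, ?_⟩
    · intro x hx β β' hag
      apply hval x hx
      intro w hw hD
      rcases eq_or_ne w u with rfl | hwu
      · simp
      · rw [Function.update_of_ne hwu, Function.update_of_ne hwu]
        exact hag w (Finset.mem_erase.mpr ⟨hwu, hw⟩) hD
    · intro β C hC
      simp only [red, Finset.mem_image] at hC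
      obtain ⟨C₀, hC₀, rfl⟩ := hC
      set c : Bool := decide ((u, false) ∈ C₀) with hc
      have hucC : (u, c) ∉ C₀ := by
        by_cases h : (u, false) ∈ C₀
        · have hct : c = true := by simp [hc, h]
          rw [hct]
          intro ht
          exact hnt C₀ hC₀ ⟨u, ht, h⟩
        · have hcf : c = false := by simp [hc, h]
          rw [hcf]; exact h
      obtain ⟨⟨a, b⟩, hl, hsatl⟩ := hsat (Function.update β u c) C₀ hC₀
      simp only at hsatl
      have hau : a ≠ u := by
        intro h
        subst h
        rw [if_neg huE, Function.update_self] at hsatl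
        exact hucC (hsatl ▸ hl)
      refine ⟨(a, b), ?_, ?_⟩
      · refine Finset.mem_erase.mpr ⟨?_, Finset.mem_erase.mpr ⟨?_, hl⟩⟩ <;>
          simp [Prod.ext_iff, hau]
      · simp only
        by_cases haE : a ∈ E
        · rw [if_pos haE]
          rw [if_pos haE] at hsatl
          rw [← hsatl]
          apply hval a haE
          intro w hw hD
          by_cases hwu : w = u
          · rw [hwu, Function.update_self, Function.update_self]
            by_cases hcf : (u, false) ∈ C₀
            · exact absurd ⟨⟨false, hcf⟩, ⟨b, hl⟩⟩ (hblock a haE (hwu ▸ hD) C₀ hC₀)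
            · simp [hc, hcf]
          · rw [Function.update_of_ne hwu, Function.update_of_ne hwu]
        · rw [if_neg haE]
          rw [if_neg haE, Function.update_of_ne hau] at hsatl
          exact hsatl
  · rintro ⟨τ, hval, hsat⟩
    refine ⟨τ, ?_, ?_⟩
    · intro x hx β β' hag
      exact hval x hx β β' (fun w hw hD => hag w (Finset.mem_of_mem_erase hw) hD)
    · intro β C hC
      obtain ⟨l, hl, hsatl⟩ :=
        hsat β ((C.erase (u, true)).erase (u, false)) (Finset.mem_image_of_mem _ hC)
      exact ⟨l, Finset.mem_of_mem_erase (Finset.mem_of_mem_erase hl), hsatl⟩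
end
end

section
/- Every dependency tree decomposition of a QBF Φ with dependency poset D is a trunk-aligned tree decomposition of (Φ, D), where the trunk can be chosen as an arbitrary leaf-to-root path of the decomposition tree. -/
noncomputable section
attribute [local instance] Classical.propDecidable

variable {V : Type}

/-- `Anc parent t s`: `s` is a (weak) ancestor of `t` in the rooted tree given by `parent`. -/
def Anc {ι : Type} (parent : ι → ι) (t s : ι) : Prop := ∃ k : ℕ, parent^[k] t = s

/-- A (rooted) tree decomposition of a graph `G`, presented via a parent function on the
nodes, bags, and for each vertex the unique highest node `forget v` whose bag contains `v`.
The bags containing a vertex form a subtree rooted at `forget v`, every edge is covered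
by some bag, and (as in nice tree decompositions) distinct variables are forgotten at
distinct nodes. -/
structure TreeDecomp (ι V : Type) (G : SimpleGraph V) where
  parent : ι → ι
  root : ι
  parent_root : parent root = root
  reaches_root : ∀ t, Anc parent t root
  bag : ι → Finset V
  forget : V → ι
  forget_mem : ∀ v, v ∈ bag (forget v)
  forget_top : ∀ v t, v ∈ bag t → Anc parent t (forget v)
  bag_subtree : ∀ v t s, v ∈ bag t → Anc parent t s → Anc parent s (forget v) → v ∈ bag s
  forget_inj : Function.Injective forget
  edge_cover : ∀ a b, G.Adj a b → ∃ t, a ∈ bag t ∧ b ∈ bag t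

/-- Trunk-alignment: for every variable `u`, either (P1) no variable depending on `u`
occurs in the bag where `u` is forgotten, or (P2) `u` is forgotten on the trunk and
every variable that `u` depends on occurs in the subtree rooted at `forget u`. -/
def TrunkAligned {ι V : Type} {G : SimpleGraph V} (T : TreeDecomp ι V G)
    (D : V → V → Prop) (Tr : Set ι) : Prop :=
  ∀ u : V,
    (∀ v : V, D u v → v ≠ u → v ∉ T.bag (T.forget u)) ∨
    (T.forget u ∈ Tr ∧ ∀ v : V, D v u → ∃ t, Anc T.parent t (T.forget u) ∧ v ∈ T.bag t)

/-- `T_{≤ p}`: the variables occurring in some bag of the subtree rooted at `p`. -/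
def belowVars {ι V : Type} {G : SimpleGraph V} (T : TreeDecomp ι V G) (p : ι) : Set V :=
  { w | ∃ s, Anc T.parent s p ∧ w ∈ T.bag s }

/-- every dependency tree decomposition of `(Φ, D)` (i.e. for all
`u ≼_D v` it is not the case that `forget u <_T forget v`) is a trunk-aligned tree
decomposition, where the trunk may be chosen as an arbitrary leaf-to-root path (here:
the set of ancestors of an arbitrary node `t₀`). -/
theorem stmt6 {ι V : Type} {G : SimpleGraph V} (T : TreeDecomp ι V G)
    (D : V → V → Prop) (hpo : IsPartialOrder V D)
    (hdep : ∀ u v : V, D u v →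
      ¬ (Anc T.parent (T.forget u) (T.forget v) ∧ T.forget u ≠ T.forget v))
    (t₀ : ι) :
    TrunkAligned T D { s | Anc T.parent t₀ s } := by
  intro u
  left
  intro v hDuv hne hmem
  have hanc := T.forget_top v _ hmem
  have := hdep u v hDuv
  have heq : T.forget u = T.forget v := by
    by_contra h
    exact this ⟨hanc, h⟩
  exact hne (T.forget_inj heq).symm
end
end

section
/- For every n ≥ 2, in the elimination-ordering characterization: for any ordering of the vertices of the primal graph of QParity_n that eliminates all of {z₁,…,z_n} before u and before all of {x₁,…,x_n}, the last eliminated vertex of {z₁,…,z_n} is adjacent in the fill-in graph to every vertex of {x₁,…,x_n} ∪ {u}, hence the ordering has width at least n+1. -/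
noncomputable section
attribute [local instance] Classical.propDecidable

variable {V : Type}

/-- The variables of `QParity_n`. -/
inductive PVtx (n : ℕ) : Type
  | x : Fin n → PVtx n
  | z : Fin n → PVtx n
  | u : PVtx n
  deriving DecidableEq

/-- The edges of the primal graph of `QParity_n` (before symmetrization):
`{x_i, z_i}`, `{x_{i+1}, z_i}`, `{z_i, z_{i+1}}` and `{u, z_n}` (all 0-indexed). -/
def parityRel (n : ℕ) : PVtx n → PVtx n → Prop
  | PVtx.x i, PVtx.z j => i = j ∨ (i : ℕ) = (j : ℕ) + 1
  | PVtx.z i, PVtx.z j => (j : ℕ) = (i : ℕ) + 1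
  | PVtx.u, PVtx.z j => (j : ℕ) = n - 1
  | _, _ => False

/-- The primal graph of `QParity_n`. -/
def GParity (n : ℕ) : SimpleGraph (PVtx n) := SimpleGraph.fromRel (parityRel n)

/-- The trivial dependency poset of `QParity_n`: all the `x`'s precede `u`, which
precedes all the `z`'s. -/
def parityDep (n : ℕ) : PVtx n → PVtx n → Prop := fun a b =>
  a = b ∨ (∃ i, a = PVtx.x i ∧ (b = PVtx.u ∨ ∃ j, b = PVtx.z j)) ∨
    (a = PVtx.u ∧ ∃ j, b = PVtx.z j)

/-- Fill-in adjacency of a graph `G` w.r.t. an elimination ordering given by positions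
`pos`: two distinct vertices are adjacent in the fill-in graph iff they are joined by a
walk all of whose internal vertices are eliminated before both of them. -/
def fillAdj {α : Type} (G : SimpleGraph α) (pos : α → ℕ) (a b : α) : Prop :=
  a ≠ b ∧ ∃ p : G.Walk a b,
    ∀ c ∈ p.support, c ≠ a → c ≠ b → pos c < pos a ∧ pos c < pos b

/-- The directed graph `D^{trv}_{QParity_n}`: every primal edge in both directions,
plus a directed edge `(a,b)` whenever `a` strictly precedes `b` in the trivial
dependency order. -/
def dstep (n : ℕ) : PVtx n → PVtx n → Prop := fun a b =>
  (GParity n).Adj a b ∨ (∃ i j, a = PVtx.x i ∧ b = PVtx.z j) ∨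
    (∃ i, a = PVtx.x i ∧ b = PVtx.u) ∨ (∃ j, a = PVtx.u ∧ b = PVtx.z j)

/-
The vertices `z₁,…,z_n` induce a path in the primal graph, and every `x_j` and `u` has a
neighbour on it. Since all of the path is eliminated before `u` and the `x`'s, the path minus
its last eliminated vertex `z_i` consists of vertices eliminated before both `z_i` and any of
these neighbours, so walking along the path and then stepping off it gives fill-in edges from
`z_i` to each of the `n + 1` vertices `x₁,…,x_n,u`, all eliminated after `z_i`.
-/

namespace SimpleGraph

variable {α : Type} {G : SimpleGraph α} {pos : α → ℕ} {S : Set α} {a b s : α}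

theorem Walk.mem_support_map_induce {a' s' : S} (q : (G.induce S).Walk a' s') {c : α}
    (hc : c ∈ (q.map (Embedding.induce S).toHom).support) : c ∈ S := by
  rw [Walk.support_map, List.mem_map] at hc
  obtain ⟨⟨c, hcS⟩, -, rfl⟩ := hc
  exact hcS

theorem Preconnected.exists_walk_support_subset_of_induce (hS : (G.induce S).Preconnected)
    (ha : a ∈ S) (hs : s ∈ S) : ∃ p : G.Walk a s, ∀ c ∈ p.support, c ∈ S := by
  obtain ⟨q⟩ := hS ⟨a, ha⟩ ⟨s, hs⟩
  exact ⟨_, fun _ => q.mem_support_map_induce⟩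

theorem fillAdj_of_preconnected_induce (hS : (G.induce S).Preconnected) (ha : a ∈ S)
    (hs : s ∈ S) (hsb : G.Adj s b) (hb : b ∉ S) (hmax : ∀ c ∈ S, c ≠ a → pos c < pos a)
    (hlt : ∀ c ∈ S, pos c < pos b) : fillAdj G pos a b := by
  refine ⟨fun hab => hb (hab ▸ ha), ?_⟩
  obtain ⟨p, hpS⟩ := hS.exists_walk_support_subset_of_induce ha hs
  refine ⟨p.concat hsb, fun c hc hca hcb => ?_⟩
  rw [Walk.support_concat, List.mem_append, List.mem_singleton] at hc
  obtain hc | rfl := hc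
  · exact ⟨hmax c (hpS c hc) hca, hlt c (hpS c hc)⟩
  · exact absurd rfl hcb

end SimpleGraph

namespace GParity

variable {n : ℕ}

theorem adj_z_z {i j : Fin n} (h : (j : ℕ) = i + 1 ∨ (i : ℕ) = j + 1) :
    (GParity n).Adj (PVtx.z i) (PVtx.z j) := by
  rw [GParity, SimpleGraph.fromRel_adj]
  refine ⟨fun hij => ?_, h⟩
  cases hij
  omega

theorem adj_z_x (j : Fin n) : (GParity n).Adj (PVtx.z j) (PVtx.x j) := by
  rw [GParity, SimpleGraph.fromRel_adj]
  exact ⟨by simp, Or.inr (Or.inl rfl)⟩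

theorem adj_z_u (j : Fin n) (hj : (j : ℕ) = n - 1) : (GParity n).Adj (PVtx.z j) PVtx.u := by
  rw [GParity, SimpleGraph.fromRel_adj]
  exact ⟨by simp, Or.inr hj⟩

theorem preconnected_induce_range_z : ((GParity n).induce (Set.range PVtx.z)).Preconnected := by
  let f : SimpleGraph.pathGraph n →g (GParity n).induce (Set.range PVtx.z) :=
    ⟨fun j => ⟨PVtx.z j, j, rfl⟩,
      fun h => adj_z_z (by rw [SimpleGraph.pathGraph_adj] at h; omega)⟩
  refine (SimpleGraph.pathGraph_preconnected n).map f ?_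
  rintro ⟨_, j, rfl⟩
  exact ⟨j, rfl⟩

end GParity

instance (n : ℕ) : Finite (PVtx n) :=
  Finite.of_injective
    (fun v => match v with
      | PVtx.x i => (Sum.inl i : Fin n ⊕ Option (Fin n))
      | PVtx.z i => Sum.inr (some i)
      | PVtx.u => Sum.inr none)
    (by rintro (_ | _ | _) (_ | _ | _) h <;> simp_all)

theorem ncard_insert_u_range_x (n : ℕ) :
    (insert PVtx.u (Set.range (PVtx.x (n := n)))).ncard = n + 1 := by
  rw [Set.ncard_insert_of_notMem (by simp),
    Set.ncard_range_of_injective (fun _ _ h => by cases h; rfl), Nat.card_eq_fintype_card,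
    Fintype.card_fin]

theorem stmt9_general (n : ℕ)
    (pos : PVtx n → ℕ) (hinj : Function.Injective pos)
    (hzu : ∀ i : Fin n, pos (PVtx.z i) < pos PVtx.u)
    (hux : ∀ i : Fin n, pos PVtx.u < pos (PVtx.x i))
    (i : Fin n) (hlast : ∀ j : Fin n, pos (PVtx.z j) ≤ pos (PVtx.z i)) :
    (∀ j : Fin n, fillAdj (GParity n) pos (PVtx.z i) (PVtx.x j)) ∧
    fillAdj (GParity n) pos (PVtx.z i) PVtx.u ∧
    n + 1 ≤
      Set.ncard { b | fillAdj (GParity n) pos (PVtx.z i) b ∧ pos (PVtx.z i) < pos b } := by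
  have hmax : ∀ c ∈ Set.range PVtx.z, c ≠ PVtx.z i → pos c < pos (PVtx.z i) := by
    rintro _ ⟨j, rfl⟩ hji
    exact (hlast j).lt_of_ne (hinj.ne hji)
  have fillAdj_of_adj_z {b : PVtx n} (hb : ∀ j, pos (PVtx.z j) < pos b) (j : Fin n)
      (hjb : (GParity n).Adj (PVtx.z j) b) : fillAdj (GParity n) pos (PVtx.z i) b :=
    SimpleGraph.fillAdj_of_preconnected_induce GParity.preconnected_induce_range_z ⟨i, rfl⟩
      ⟨j, rfl⟩ hjb (by rintro ⟨k, rfl⟩; exact (hb k).false) hmax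
      (by rintro _ ⟨k, rfl⟩; exact hb k)
  have hx (j : Fin n) : fillAdj (GParity n) pos (PVtx.z i) (PVtx.x j) :=
    fillAdj_of_adj_z (fun k => (hzu k).trans (hux j)) j (GParity.adj_z_x j)
  have hu : fillAdj (GParity n) pos (PVtx.z i) PVtx.u :=
    fillAdj_of_adj_z hzu ⟨n - 1, Nat.sub_one_lt_of_lt i.isLt⟩ (GParity.adj_z_u _ rfl)
  refine ⟨hx, hu, (ncard_insert_u_range_x n).ge.trans (Set.ncard_le_ncard ?_ (Set.toFinite _))⟩
  rintro _ (rfl | ⟨j, rfl⟩)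
  · exact ⟨hu, hzu i⟩
  · exact ⟨hx j, (hzu i).trans (hux j)⟩

/-- for every `n ≥ 2` and every elimination ordering of the primal
graph of `QParity_n` eliminating all of `{z₁,…,z_n}` before `u` and before all of
`{x₁,…,x_n}`, the last eliminated `z`-vertex is adjacent in the fill-in graph to every
`x_j` and to `u`; hence the ordering has width at least `n + 1`. -/
theorem stmt9 (n : ℕ) (hn : 2 ≤ n)
    (pos : PVtx n → ℕ) (hinj : Function.Injective pos)
    (hzu : ∀ i : Fin n, pos (PVtx.z i) < pos PVtx.u)
    (hux : ∀ i : Fin n, pos PVtx.u < pos (PVtx.x i))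
    (i : Fin n) (hlast : ∀ j : Fin n, pos (PVtx.z j) ≤ pos (PVtx.z i)) :
    (∀ j : Fin n, fillAdj (GParity n) pos (PVtx.z i) (PVtx.x j)) ∧
    fillAdj (GParity n) pos (PVtx.z i) PVtx.u ∧
    n + 1 ≤
      Set.ncard { b | fillAdj (GParity n) pos (PVtx.z i) b ∧ pos (PVtx.z i) < pos b } :=
  stmt9_general n pos hinj hzu hux i hlast
end
end

section
/- For every n ≥ 2, in the invisible cops-and-robber game on the directed graph D obtained from QParity_n's primal graph (all edges made bidirected, plus directed edges (a,b) whenever a precedes b in the prefix order), n cops do not suffice to capture the robber; hence the cop number of D exceeds n. -/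
noncomputable section
attribute [local instance] Classical.propDecidable

variable {V : Type}

lemma dstep_xz' {n : ℕ} (i j : Fin n) : dstep n (PVtx.x i) (PVtx.z j) :=
  Or.inr (Or.inl ⟨i, j, rfl, rfl⟩)

lemma dstep_xu' {n : ℕ} (i : Fin n) : dstep n (PVtx.x i) PVtx.u :=
  Or.inr (Or.inr (Or.inl ⟨i, rfl, rfl⟩))

lemma dstep_uz' {n : ℕ} (j : Fin n) : dstep n PVtx.u (PVtx.z j) :=
  Or.inr (Or.inr (Or.inr ⟨j, rfl, rfl⟩))

lemma dstep_zx' {n : ℕ} (j : Fin n) : dstep n (PVtx.z j) (PVtx.x j) := by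
  left
  simp only [GParity, SimpleGraph.fromRel_adj]
  exact ⟨by simp, Or.inr (Or.inl rfl)⟩

lemma count_aux (n : ℕ) (A C : Finset (PVtx n)) (hA : A.card ≤ n) (hC : C ⊆ A) :
    PVtx.u ∉ A ∨ ∃ j : Fin n, PVtx.x j ∉ A ∧ PVtx.z j ∉ C := by
  by_contra h
  push_neg at h
  obtain ⟨hu, hj⟩ := h
  classical
  set g : Fin n → PVtx n := fun j => if PVtx.x j ∈ A then PVtx.x j else PVtx.z j with hg
  have hgA : ∀ j, g j ∈ A := by
    intro j
    by_cases hx : PVtx.x j ∈ A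
    · simpa [g, hx]
    · have := hj j hx
      simp only [g, hx, if_neg, if_false]
      exact hC this
  have hginj : Function.Injective g := by
    intro j j' hjj
    simp only [g] at hjj
    split_ifs at hjj <;> simp_all
  have hsub : insert PVtx.u (Finset.univ.image g) ⊆ A := by
    intro a ha
    rcases Finset.mem_insert.mp ha with rfl | ha
    · exact hu
    · obtain ⟨j, _, rfl⟩ := Finset.mem_image.mp ha
      exact hgA j
  have hcard : (insert PVtx.u (Finset.univ.image g)).card = n + 1 := by
    rw [Finset.card_insert_of_notMem, Finset.card_image_of_injective _ hginj,
      Finset.card_univ, Fintype.card_fin]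
    intro hmem
    obtain ⟨j, _, hjg⟩ := Finset.mem_image.mp hmem
    simp only [g] at hjg
    split_ifs at hjg <;> simp_all
  have := Finset.card_le_card hsub
  omega

/-- in the invisible cops-and-robber game on the directed graph
`D^{trv}_{QParity_n}`, `n` cops do not suffice: against any sequence of cop placements
of size at most `n`, the robber has a trajectory that always occupies a vertex of
`{x₁,…,x_n, u}` not occupied by a cop, moving between rounds along directed paths that
avoid the cops remaining on the board. -/
theorem stmt10 (n : ℕ) (hn : 2 ≤ n)
    (cops : ℕ → Finset (PVtx n)) (hcops : ∀ t, (cops t).card ≤ n) :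
    ∃ r : ℕ → PVtx n,
      (∀ t, (∃ i, r t = PVtx.x i) ∨ r t = PVtx.u) ∧
      (∀ t, r t ∉ cops t) ∧
      (∀ t, Relation.ReflTransGen
        (fun a b => dstep n a b ∧ a ∉ cops t ∩ cops (t + 1) ∧ b ∉ cops t ∩ cops (t + 1))
        (r t) (r (t + 1))) := by
  classical
  set Pred : ℕ → PVtx n → Prop :=
    fun t v => ((∃ i, v = PVtx.x i) ∨ v = PVtx.u) ∧ v ∉ cops t with hPred
  -- base
  have hbase : ∃ v, Pred 0 v := by
    rcases count_aux n (cops 0) (cops 0) (hcops 0) (le_refl _) with hu | ⟨j, hx, _⟩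
    · exact ⟨PVtx.u, Or.inr rfl, hu⟩
    · exact ⟨PVtx.x j, Or.inl ⟨j, rfl⟩, hx⟩
  -- step
  have hstep : ∀ t v, Pred t v → ∃ w, Pred (t + 1) w ∧
      Relation.ReflTransGen
        (fun a b => dstep n a b ∧ a ∉ cops t ∩ cops (t + 1) ∧ b ∉ cops t ∩ cops (t + 1))
        v w := by
    intro t v hv
    obtain ⟨hvS, hvc⟩ := hv
    set C := cops t ∩ cops (t + 1) with hCdef
    have hCt : C ⊆ cops t := Finset.inter_subset_left
    have hCA : C ⊆ cops (t + 1) := Finset.inter_subset_right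
    have hvC : v ∉ C := fun h => hvc (hCt h)
    rcases count_aux n (cops (t + 1)) C (hcops (t + 1)) hCA with hu | ⟨j, hxj, hzj⟩
    · -- move to u
      have huC : PVtx.u ∉ C := fun h => hu (hCA h)
      refine ⟨PVtx.u, ⟨Or.inr rfl, hu⟩, ?_⟩
      rcases hvS with ⟨i, rfl⟩ | rfl
      · exact Relation.ReflTransGen.single ⟨dstep_xu' i, hvC, huC⟩
      · exact Relation.ReflTransGen.refl
    · -- move to x j via z j
      have hxjC : PVtx.x j ∉ C := fun h => hxj (hCA h)
      refine ⟨PVtx.x j, ⟨Or.inl ⟨j, rfl⟩, hxj⟩, ?_⟩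
      rcases hvS with ⟨i, rfl⟩ | rfl
      · exact Relation.ReflTransGen.head ⟨dstep_xz' i j, hvC, hzj⟩
          (Relation.ReflTransGen.single ⟨dstep_zx' j, hzj, hxjC⟩)
      · exact Relation.ReflTransGen.head ⟨dstep_uz' j, hvC, hzj⟩
          (Relation.ReflTransGen.single ⟨dstep_zx' j, hzj, hxjC⟩)
  choose w hw1 hw2 using hstep
  let rr : ∀ t : ℕ, {v : PVtx n // Pred t v} :=
    fun t => Nat.rec ⟨hbase.choose, hbase.choose_spec⟩
      (fun t p => ⟨w t p.1 p.2, hw1 t p.1 p.2⟩) t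
  refine ⟨fun t => (rr t).1, fun t => (rr t).2.1, fun t => (rr t).2.2, fun t => ?_⟩
  exact hw2 t (rr t).1 (rr t).2
end
end

section
/- For every n ≥ 2, the bilateral treewidth of QParity_n with respect to the trivial dependency poset equals 2: the path-shaped decomposition with bags ∅, {x₁}, {x₁,z₁}, {z₁}, {z₁,x₂}, {z₁,x₂,z₂}, {x₂,z₂}, {z₂}, …, {x_n,z_n,u}, {z_n,u}, {u}, ∅ (taken as a single trunk) is a trunk-aligned tree decomposition of width 2, and no trunk-aligned tree decomposition of width less than 2 exists. -/
noncomputable section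
attribute [local instance] Classical.propDecidable

variable {V : Type}

/-! The upper bound is a path decomposition on the nodes `0 → 1 → ⋯ → 3n+1`, given by one
interval per vertex (indices from 0): `x_i ↦ [3i, 3i+1]`, `z_i ↦ [3i, 3i+3]`, `u ↦ [3n, 3n+1]`,
the bag at a node being the vertices whose interval contains it. A bag meets the `x`'s and `u`
at most once and the `z`'s in at most two consecutive indices, so it has at most three vertices.
Every `x_i` and `u` is forgotten after everything it depends on has appeared, and nothing but
`z_j` itself depends on `z_j`, so the whole path is a valid trunk.

The lower bound holds for every tree decomposition: subtrees of a tree have the Helly property,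
so the triangle `x_1, z_0, z_1` lies in one bag. -/

theorem Anc.trans {ι : Type} {p : ι → ι} {a b c : ι} (hab : Anc p a b) (hbc : Anc p b c) :
    Anc p a c := by
  obtain ⟨k, rfl⟩ := hab
  obtain ⟨m, rfl⟩ := hbc
  exact ⟨m + k, Function.iterate_add_apply p m k a⟩

theorem Anc.total {ι : Type} {p : ι → ι} {t a b : ι} (ha : Anc p t a) (hb : Anc p t b) :
    Anc p a b ∨ Anc p b a := by
  obtain ⟨k, rfl⟩ := ha
  obtain ⟨m, rfl⟩ := hb
  rcases le_total k m with h | h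
  · exact .inl ⟨m - k, by rw [← Function.iterate_add_apply, Nat.sub_add_cancel h]⟩
  · exact .inr ⟨k - m, by rw [← Function.iterate_add_apply, Nat.sub_add_cancel h]⟩

namespace TreeDecomp

variable {ι : Type} {G : SimpleGraph V} (T : TreeDecomp ι V G)

theorem anc_forget_total {a b : V} {t : ι} (ha : a ∈ T.bag t) (hb : b ∈ T.bag t) :
    Anc T.parent (T.forget a) (T.forget b) ∨ Anc T.parent (T.forget b) (T.forget a) :=
  (T.forget_top a t ha).total (T.forget_top b t hb)

theorem mem_bag_forget_of_anc {a b : V} {t : ι} (ha : a ∈ T.bag t) (hb : b ∈ T.bag t)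
    (h : Anc T.parent (T.forget a) (T.forget b)) : b ∈ T.bag (T.forget a) :=
  T.bag_subtree b t _ hb (T.forget_top a t ha) h

theorem exists_bag_of_triangle {a b c : V} (hab : G.Adj a b) (hbc : G.Adj b c)
    (hac : G.Adj a c) : ∃ t, a ∈ T.bag t ∧ b ∈ T.bag t ∧ c ∈ T.bag t := by
  obtain ⟨s, hsa, hsb⟩ := T.edge_cover a b hab
  obtain ⟨r, hrb, hrc⟩ := T.edge_cover b c hbc
  obtain ⟨q, hqa, hqc⟩ := T.edge_cover a c hac
  rcases T.anc_forget_total hsa hsb with hab' | hba'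
  · rcases T.anc_forget_total hqa hqc with hac' | hca'
    · exact ⟨_, T.forget_mem a, T.mem_bag_forget_of_anc hsa hsb hab',
        T.mem_bag_forget_of_anc hqa hqc hac'⟩
    · exact ⟨_, T.mem_bag_forget_of_anc hqc hqa hca',
        T.mem_bag_forget_of_anc hrc hrb (hca'.trans hab'), T.forget_mem c⟩
  · rcases T.anc_forget_total hrb hrc with hbc' | hcb'
    · exact ⟨_, T.mem_bag_forget_of_anc hsb hsa hba', T.forget_mem b,
        T.mem_bag_forget_of_anc hrb hrc hbc'⟩
    · exact ⟨_, T.mem_bag_forget_of_anc hqc hqa (hcb'.trans hba'),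
        T.mem_bag_forget_of_anc hrc hrb hcb', T.forget_mem c⟩

theorem exists_three_le_card_bag {a b c : V} (hab : G.Adj a b) (hbc : G.Adj b c)
    (hac : G.Adj a c) : ∃ t, 3 ≤ (T.bag t).card := by
  obtain ⟨t, ha, hb, hc⟩ := T.exists_bag_of_triangle hab hbc hac
  exact ⟨t, Finset.two_lt_card.2 ⟨a, ha, b, hb, c, hc, hab.ne, hac.ne, hbc.ne⟩⟩

end TreeDecomp

def pathParent (N t : ℕ) : ℕ := min (t + 1) N

theorem iterate_pathParent {N t : ℕ} (ht : t ≤ N) (k : ℕ) :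
    (pathParent N)^[k] t = min (t + k) N := by
  induction k with
  | zero => simp [ht]
  | succ k ih => rw [Function.iterate_succ_apply', ih, pathParent]; omega

theorem anc_pathParent_iff {N t s : ℕ} (ht : t ≤ N) :
    Anc (pathParent N) t s ↔ t ≤ s ∧ s ≤ N := by
  constructor
  · rintro ⟨k, rfl⟩
    rw [iterate_pathParent ht]
    omega
  · rintro ⟨hts, hsN⟩
    exact ⟨s - t, by rw [iterate_pathParent ht]; omega⟩

structure IntervalLayout (G : SimpleGraph V) (N : ℕ) where
  lo : V → ℕ
  hi : V → ℕ
  lo_le_hi : ∀ v, lo v ≤ hi v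
  hi_le : ∀ v, hi v ≤ N
  hi_injective : Function.Injective hi
  overlap_of_adj : ∀ a b, G.Adj a b → lo a ≤ hi b ∧ lo b ≤ hi a

namespace IntervalLayout

variable [Fintype V] {G : SimpleGraph V} {N : ℕ} (L : IntervalLayout G N)

def toTreeDecomp : TreeDecomp ℕ V G where
  parent := pathParent N
  root := N
  parent_root := by simp [pathParent]
  reaches_root t := by
    by_cases ht : t ≤ N
    · exact (anc_pathParent_iff ht).2 ⟨ht, le_rfl⟩
    · exact ⟨1, by simp [pathParent]; omega⟩
  bag t := Finset.univ.filter fun v => L.lo v ≤ t ∧ t ≤ L.hi v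
  forget := L.hi
  forget_mem v := by simp [L.lo_le_hi v]
  forget_top v t hv := by
    simp only [Finset.mem_filter, Finset.mem_univ, true_and] at hv
    exact (anc_pathParent_iff (hv.2.trans (L.hi_le v))).2 ⟨hv.2, L.hi_le v⟩
  bag_subtree v t s hv hts hsv := by
    simp only [Finset.mem_filter, Finset.mem_univ, true_and] at hv ⊢
    obtain ⟨hts, hsN⟩ := (anc_pathParent_iff (hv.2.trans (L.hi_le v))).1 hts
    exact ⟨hv.1.trans hts, ((anc_pathParent_iff hsN).1 hsv).1⟩
  forget_inj := L.hi_injective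
  edge_cover a b hab := by
    have := L.overlap_of_adj a b hab
    have := L.lo_le_hi a
    have := L.lo_le_hi b
    exact ⟨max (L.lo a) (L.lo b), by simp; omega, by simp; omega⟩

@[simp]
theorem mem_bag_toTreeDecomp {t : ℕ} {v : V} :
    v ∈ L.toTreeDecomp.bag t ↔ L.lo v ≤ t ∧ t ≤ L.hi v := by
  simp [toTreeDecomp]

theorem trunkAligned_toTreeDecomp {D : V → V → Prop}
    (hD : ∀ u, (∀ v, D u v → v = u) ∨ ∀ w, D w u → L.lo w ≤ L.hi u) :
    TrunkAligned L.toTreeDecomp D { s | Anc L.toTreeDecomp.parent 0 s } := by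
  intro u
  rcases hD u with hP1 | hP2
  · exact .inl fun v hv hne => absurd (hP1 v hv) hne
  · refine .inr ⟨(anc_pathParent_iff (Nat.zero_le N)).2 ⟨Nat.zero_le _, L.hi_le u⟩, ?_⟩
    intro w hw
    have hwN : L.lo w ≤ N := (L.lo_le_hi w).trans (L.hi_le w)
    exact ⟨L.lo w, (anc_pathParent_iff hwN).2 ⟨hP2 w hw, L.hi_le u⟩,
      (L.mem_bag_toTreeDecomp).2 ⟨le_rfl, L.lo_le_hi w⟩⟩

end IntervalLayout

namespace PVtx

variable (n : ℕ)

def equivSum : Fin n ⊕ Fin n ⊕ Unit ≃ PVtx n where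
  toFun
    | .inl i => .x i
    | .inr (.inl i) => .z i
    | .inr (.inr _) => .u
  invFun
    | .x i => .inl i
    | .z i => .inr (.inl i)
    | .u => .inr (.inr ())
  left_inv := by rintro (i | i | ⟨⟩) <;> rfl
  right_inv := by rintro (i | i | _) <;> rfl

instance : Fintype (PVtx n) := Fintype.ofEquiv _ (equivSum n)

end PVtx

section QParity

variable (n : ℕ)

def parityLo : PVtx n → ℕ
  | .x i => 3 * i
  | .z i => 3 * i
  | .u => 3 * n

def parityHi : PVtx n → ℕ
  | .x i => 3 * i + 1
  | .z i => 3 * i + 3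
  | .u => 3 * n + 1

theorem parityRel_overlap {a b : PVtx n} (h : parityRel n a b) :
    parityLo n a ≤ parityHi n b ∧ parityLo n b ≤ parityHi n a := by
  cases a <;> cases b <;> simp [parityRel, parityLo, parityHi, Fin.ext_iff] at h ⊢ <;> omega

def parityLayout : IntervalLayout (GParity n) (3 * n + 1) where
  lo := parityLo n
  hi := parityHi n
  lo_le_hi v := by cases v <;> simp [parityLo, parityHi]
  hi_le v := by cases v <;> simp only [parityHi] <;> omega
  hi_injective v w h := by
    cases v <;> cases w <;> simp [parityHi, Fin.ext_iff] at h ⊢ <;> omega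
  overlap_of_adj a b hab := by
    rw [GParity, SimpleGraph.fromRel_adj] at hab
    rcases hab.2 with h | h
    · exact parityRel_overlap n h
    · exact (parityRel_overlap n h).symm

/-- Injective on every bag: the `z`'s in a bag have consecutive indices. -/
def paritySlot : PVtx n → ℕ
  | .x _ => 0
  | .z i => 1 + i % 2
  | .u => 0

theorem card_bag_parityLayout_le (t : ℕ) :
    ((parityLayout n).toTreeDecomp.bag t).card ≤ 3 := by
  have hmaps : Set.MapsTo (paritySlot n) ((parityLayout n).toTreeDecomp.bag t)
      (Finset.range 3) := by
    intro v _
    cases v <;> simp [paritySlot]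
    omega
  have hinj : Set.InjOn (paritySlot n) ((parityLayout n).toTreeDecomp.bag t) := by
    intro v hv w hw h
    simp only [Finset.mem_coe, IntervalLayout.mem_bag_toTreeDecomp] at hv hw
    cases v <;> cases w <;>
      simp [parityLayout, parityLo, parityHi, paritySlot, Fin.ext_iff] at hv hw h ⊢ <;> omega
  simpa using Finset.card_le_card_of_injOn _ hmaps hinj

theorem trunkAligned_parityLayout :
    TrunkAligned (parityLayout n).toTreeDecomp (parityDep n)
      { s | Anc (parityLayout n).toTreeDecomp.parent 0 s } := by
  refine (parityLayout n).trunkAligned_toTreeDecomp fun v => ?_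
  cases v <;> simp [parityDep, parityLayout, parityLo, parityHi]
  exact .inr fun i => by have := i.isLt; omega

theorem gParity_adj_x_z {i j : Fin n} (h : (i : ℕ) = j ∨ (i : ℕ) = j + 1) :
    (GParity n).Adj (.x i) (.z j) := by
  simp [GParity, parityRel, Fin.ext_iff, h]

end QParity

/-- for every `n ≥ 2`, the bilateral treewidth of `QParity_n` with
respect to the trivial dependency poset equals 2: there is a trunk-aligned tree
decomposition of width 2 (all bags have at most 3 vertices) whose trunk is a full
leaf-to-root path, and every trunk-aligned tree decomposition has width at least 2
(some bag has at least 3 vertices). -/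
theorem stmt11 (n : ℕ) (hn : 2 ≤ n) :
    (∃ (ι : Type) (T : TreeDecomp ι (PVtx n) (GParity n)) (t₀ : ι),
        TrunkAligned T (parityDep n) { s | Anc T.parent t₀ s } ∧
        ∀ t, (T.bag t).card ≤ 3) ∧
    (∀ (ι : Type) (T : TreeDecomp ι (PVtx n) (GParity n)) (t₀ : ι),
        TrunkAligned T (parityDep n) { s | Anc T.parent t₀ s } →
        ∃ t, 3 ≤ (T.bag t).card) := by
  refine ⟨⟨ℕ, (parityLayout n).toTreeDecomp, 0, trunkAligned_parityLayout n,
    card_bag_parityLayout_le n⟩, fun ι T t₀ _ => ?_⟩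
  let z₀ : PVtx n := .z ⟨0, by omega⟩
  let z₁ : PVtx n := .z ⟨1, by omega⟩
  have hz : (GParity n).Adj z₀ z₁ := by simp [z₀, z₁, GParity, parityRel, Fin.ext_iff]
  exact T.exists_three_le_card_bag (gParity_adj_x_z n (.inr rfl)) hz
    (gParity_adj_x_z n (.inl rfl))
end
end

section
/- Let Φ be a QBF, T a trunk-aligned tree decomposition of (Φ, D), and V = (v₁,…,v_n) an elimination ordering agreeing with T (i.e., ordered by a linearization of the forget-node order). Let Π = Π₀,…,Π_n be the derivation sequence produced by rules R1–R4. Then for each i ∈ [n] and each matrix ψ occurring in some set π ∈ F^(i−1), every neighbor of v_i in the primal graph of ψ belongs to the bag χ(forget(v_i)). -/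
noncomputable section
attribute [local instance] Classical.propDecidable

variable {V : Type}

/-- Strategy extension of a set `π` of matrices up to the dependency-closed variable
set `S`: for each choice of one partial existential strategy per matrix, collect all
matrices obtained by restricting a matrix of `π` with the combined assignment of the
chosen strategy against some universal assignment. -/
def strext {V : Type} (E U : Finset V) (D : V → V → Prop) (S : Finset V)
    (π : Set (CNF V)) : Set (Set (CNF V)) :=
  { π' | ∃ τ : CNF V → V → (V → Bool) → Bool,
      (∀ ψ ∈ π, strategyValid E U D (τ ψ)) ∧
      π' = { ψ' | ∃ ψ ∈ π, ∃ β : V → Bool, ψ' = restrict ψ S (combined E (τ ψ) β) } }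

/-- A derivation sequence for the QBF with matrix `φ`, existential/universal variables
`E`/`U` and dependency poset `D`, along an elimination ordering `v₀, …, v_{m-1}` that
agrees with a trunk-aligned tree decomposition `T` of the primal graph `G` of `φ`.
`F i` is the family of sets of matrices after `i` elimination steps and `Rem i` is the
set of variables remaining in the prefix; the steps follow rules R1–R4. -/
structure DerivSeq (V ι : Type) (G : SimpleGraph V) where
  T : TreeDecomp ι V G
  E : Finset V
  U : Finset V
  EU_disj : Disjoint E U
  D : V → V → Prop
  Dposet : IsPartialOrder V D
  φ : CNF V
  φ_nt : ∀ C ∈ φ, ¬ Tauto C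
  φ_vars : ∀ C ∈ φ, ∀ l ∈ C, l.1 ∈ E ∪ U
  primal : ∀ a b, G.Adj a b ↔ primalAdj φ a b
  m : ℕ
  v : Fin m → V
  v_inj : Function.Injective v
  v_covers : ∀ w ∈ E ∪ U, ∃ i, v i = w
  agrees : ∀ i j : Fin m,
    Anc T.parent (T.forget (v i)) (T.forget (v j)) → T.forget (v i) ≠ T.forget (v j) →
      i < j
  F : ℕ → Set (Set (CNF V))
  Rem : ℕ → Finset V
  F0 : F 0 = {{φ}}
  Rem0 : Rem 0 = E ∪ U
  stepR1 : ∀ i : Fin m, v i ∉ Rem (i : ℕ) →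
    F ((i : ℕ) + 1) = F (i : ℕ) ∧ Rem ((i : ℕ) + 1) = Rem (i : ℕ)
  stepR2 : ∀ i : Fin m, v i ∈ Rem (i : ℕ) → v i ∈ E →
    (∀ w ∈ Rem (i : ℕ), D (v i) w → w ≠ v i → w ∉ T.bag (T.forget (v i))) →
    F ((i : ℕ) + 1) = { π' | ∃ π ∈ F (i : ℕ), π' = (fun ψ => res ψ (v i)) '' π } ∧
    Rem ((i : ℕ) + 1) = (Rem (i : ℕ)).erase (v i)
  stepR3 : ∀ i : Fin m, v i ∈ Rem (i : ℕ) → v i ∈ U →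
    (∀ w ∈ Rem (i : ℕ), D (v i) w → w ≠ v i → w ∉ T.bag (T.forget (v i))) →
    F ((i : ℕ) + 1) = { π' | ∃ π ∈ F (i : ℕ), π' = (fun ψ => red ψ (v i)) '' π } ∧
    Rem ((i : ℕ) + 1) = (Rem (i : ℕ)).erase (v i)
  stepR4 : ∀ i : Fin m, v i ∈ Rem (i : ℕ) →
    ¬ (∀ w ∈ Rem (i : ℕ), D (v i) w → w ≠ v i → w ∉ T.bag (T.forget (v i))) →
    (F ((i : ℕ) + 1) =
      ⋃ π ∈ F (i : ℕ), strext E U D ((Rem (i : ℕ)).filter (fun w => D w (v i))) π) ∧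
    Rem ((i : ℕ) + 1) = (Rem (i : ℕ)).filter (fun w => ¬ D w (v i))

/-! ### Auxiliary lemmas for Statement 12 -/

lemma St12.tauto_mono {C C' : Clause V} (h : C' ⊆ C) (ht : Tauto C') : Tauto C := by
  obtain ⟨v, h1, h2⟩ := ht; exact ⟨v, h h1, h h2⟩

lemma St12.anc_comparable {ι : Type} (p : ι → ι) {t s s' : ι}
    (h : Anc p t s) (h' : Anc p t s') : Anc p s s' ∨ Anc p s' s := by
  obtain ⟨k, hk⟩ := h; obtain ⟨k', hk'⟩ := h'
  rcases le_total k k' with hle | hle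
  · left
    exact ⟨k' - k, by
      rw [← hk, ← Function.iterate_add_apply, Nat.sub_add_cancel hle, hk']⟩
  · right
    exact ⟨k - k', by
      rw [← hk', ← Function.iterate_add_apply, Nat.sub_add_cancel hle, hk]⟩

lemma St12.mem_res_cases {ψ : CNF V} {x : V} {C : Clause V} (h : C ∈ res ψ x) :
    (C ∈ ψ ∧ (x, true) ∉ C ∧ (x, false) ∉ C) ∨
    (¬ Tauto C ∧ ∃ C1, C1 ∈ ψ ∧ (x, true) ∈ C1 ∧ ∃ C2, C2 ∈ ψ ∧ (x, false) ∈ C2 ∧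
      C = C1.erase (x, true) ∪ C2.erase (x, false)) := by
  rcases Finset.mem_union.1 h with h | h
  · rcases Finset.mem_sdiff.1 h with ⟨h1, h2⟩
    refine Or.inl ⟨h1, ?_, ?_⟩
    · intro hc; exact h2 (Finset.mem_union.2 (Or.inl (Finset.mem_filter.2 ⟨h1, hc⟩)))
    · intro hc; exact h2 (Finset.mem_union.2 (Or.inr (Finset.mem_filter.2 ⟨h1, hc⟩)))
  · rcases Finset.mem_filter.1 h with ⟨h1, hnt⟩
    rcases Finset.mem_image.1 h1 with ⟨p, hp, hpe⟩
    rcases Finset.mem_product.1 hp with ⟨hp1, hp2⟩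
    rcases Finset.mem_filter.1 hp1 with ⟨hC1, hx1⟩
    rcases Finset.mem_filter.1 hp2 with ⟨hC2, hx2⟩
    exact Or.inr ⟨hnt, p.1, hC1, hx1, p.2, hC2, hx2, hpe.symm⟩

lemma St12.varIn_erase_pos {C : Clause V} {x a : V} (hx : (x, true) ∈ C) (hnt : ¬ Tauto C)
    {b : Bool} (h : (a, b) ∈ C.erase (x, true)) : varIn a C ∧ a ≠ x := by
  rcases Finset.mem_erase.1 h with ⟨hne, hmem⟩
  refine ⟨⟨b, hmem⟩, ?_⟩
  rintro rfl
  cases b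
  · exact hnt ⟨a, hx, hmem⟩
  · exact hne rfl

lemma St12.varIn_erase_neg {C : Clause V} {x a : V} (hx : (x, false) ∈ C) (hnt : ¬ Tauto C)
    {b : Bool} (h : (a, b) ∈ C.erase (x, false)) : varIn a C ∧ a ≠ x := by
  rcases Finset.mem_erase.1 h with ⟨hne, hmem⟩
  refine ⟨⟨b, hmem⟩, ?_⟩
  rintro rfl
  cases b
  · exact hne rfl
  · exact hnt ⟨a, hmem, hx⟩

/-- The inductive invariant: at step `j`, every matrix has non-tautological clauses,
all its variables are among the remaining variables, and every primal edge of the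
matrix is covered by some bag. -/
def St12.Inv {ι : Type} {G : SimpleGraph V} (Δ : DerivSeq V ι G) (j : ℕ) : Prop :=
  ∀ π ∈ Δ.F j, ∀ ψ ∈ π,
    (∀ C ∈ ψ, ¬ Tauto C) ∧
    (∀ a : V, (∃ C ∈ ψ, varIn a C) → a ∈ Δ.Rem j) ∧
    (∀ a b : V, primalAdj ψ a b → ∃ t, a ∈ Δ.T.bag t ∧ b ∈ Δ.T.bag t)

lemma St12.rem_facts {ι : Type} {G : SimpleGraph V} (Δ : DerivSeq V ι G) :
    ∀ j, j ≤ Δ.m → Δ.Rem j ⊆ Δ.E ∪ Δ.U ∧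
      ∀ k : Fin Δ.m, (k : ℕ) < j → Δ.v k ∉ Δ.Rem j := by
  intro j
  induction j with
  | zero =>
    intro _
    refine ⟨by rw [Δ.Rem0], fun k hk => absurd hk (Nat.not_lt_zero _)⟩
  | succ j ih =>
    intro hj
    obtain ⟨hEU, hk⟩ := ih (Nat.le_of_succ_le hj)
    have hjm : j < Δ.m := hj
    have hrefl : Δ.D (Δ.v ⟨j, hjm⟩) (Δ.v ⟨j, hjm⟩) := Δ.Dposet.refl _
    by_cases hv : Δ.v ⟨j, hjm⟩ ∈ Δ.Rem j
    · by_cases hcond : ∀ w ∈ Δ.Rem j, Δ.D (Δ.v ⟨j, hjm⟩) w → w ≠ Δ.v ⟨j, hjm⟩ →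
          w ∉ Δ.T.bag (Δ.T.forget (Δ.v ⟨j, hjm⟩))
      · rcases Finset.mem_union.1 (hEU hv) with hE | hU
        · have hR : Δ.Rem (j + 1) = (Δ.Rem j).erase (Δ.v ⟨j, hjm⟩) :=
            (Δ.stepR2 ⟨j, hjm⟩ hv hE hcond).2
          rw [hR]
          refine ⟨(Finset.erase_subset _ _).trans hEU, ?_⟩
          intro k hklt
          rcases Nat.lt_succ_iff_lt_or_eq.1 hklt with h | h
          · intro hmem; exact hk k h (Finset.mem_of_mem_erase hmem)
          · have : k = ⟨j, hjm⟩ := Fin.ext h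
            rw [this]; exact Finset.notMem_erase _ _
        · have hR : Δ.Rem (j + 1) = (Δ.Rem j).erase (Δ.v ⟨j, hjm⟩) :=
            (Δ.stepR3 ⟨j, hjm⟩ hv hU hcond).2
          rw [hR]
          refine ⟨(Finset.erase_subset _ _).trans hEU, ?_⟩
          intro k hklt
          rcases Nat.lt_succ_iff_lt_or_eq.1 hklt with h | h
          · intro hmem; exact hk k h (Finset.mem_of_mem_erase hmem)
          · have : k = ⟨j, hjm⟩ := Fin.ext h
            rw [this]; exact Finset.notMem_erase _ _
      · have hR : Δ.Rem (j + 1) = (Δ.Rem j).filter (fun w => ¬ Δ.D w (Δ.v ⟨j, hjm⟩)) :=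
          (Δ.stepR4 ⟨j, hjm⟩ hv hcond).2
        rw [hR]
        refine ⟨(Finset.filter_subset _ _).trans hEU, ?_⟩
        intro k hklt hmem
        rcases Finset.mem_filter.1 hmem with ⟨hmem0, hnd⟩
        rcases Nat.lt_succ_iff_lt_or_eq.1 hklt with h | h
        · exact hk k h hmem0
        · have : k = ⟨j, hjm⟩ := Fin.ext h
          rw [this] at hnd; exact hnd hrefl
    · have hR : Δ.Rem (j + 1) = Δ.Rem j := (Δ.stepR1 ⟨j, hjm⟩ hv).2
      rw [hR]
      refine ⟨hEU, ?_⟩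
      intro k hklt
      rcases Nat.lt_succ_iff_lt_or_eq.1 hklt with h | h
      · exact hk k h
      · have : k = ⟨j, hjm⟩ := Fin.ext h
        rw [this]; exact hv

/-- The key claim (used both in the induction and as the final statement): under the
invariant, every primal neighbor of `v j` lies in the bag of `forget (v j)`. -/
lemma St12.bag_claim {ι : Type} {G : SimpleGraph V} (Δ : DerivSeq V ι G) (j : Fin Δ.m)
    (hInv : St12.Inv Δ (j : ℕ))
    (hRemEU : Δ.Rem (j : ℕ) ⊆ Δ.E ∪ Δ.U)
    (hRemk : ∀ k : Fin Δ.m, (k : ℕ) < (j : ℕ) → Δ.v k ∉ Δ.Rem (j : ℕ)) :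
    ∀ π ∈ Δ.F (j : ℕ), ∀ ψ ∈ π, ∀ w, primalAdj ψ (Δ.v j) w →
      w ∈ Δ.T.bag (Δ.T.forget (Δ.v j)) := by
  intro π hπ ψ hψ w hw
  obtain ⟨_, hVars, hCov⟩ := hInv π hπ ψ hψ
  obtain ⟨hne, C, hC, hvC, hwC⟩ := hw
  have hwRem : w ∈ Δ.Rem (j : ℕ) := hVars w ⟨C, hC, hwC⟩
  obtain ⟨t, hvt, hwt⟩ := hCov _ _ ⟨hne, C, hC, hvC, hwC⟩
  have h1 : Anc Δ.T.parent t (Δ.T.forget (Δ.v j)) := Δ.T.forget_top _ _ hvt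
  have h2 : Anc Δ.T.parent t (Δ.T.forget w) := Δ.T.forget_top _ _ hwt
  rcases St12.anc_comparable _ h1 h2 with hcase | hcase
  · exact Δ.T.bag_subtree w t _ hwt h1 hcase
  · by_cases heq : Δ.T.forget w = Δ.T.forget (Δ.v j)
    · have := Δ.T.forget_mem w; rwa [heq] at this
    · obtain ⟨k, hkw⟩ := Δ.v_covers w (hRemEU hwRem)
      subst hkw
      have hklt : k < j := Δ.agrees k j hcase heq
      exact absurd hwRem (hRemk k hklt)

lemma St12.inv_zero {ι : Type} {G : SimpleGraph V} (Δ : DerivSeq V ι G) :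
    St12.Inv Δ 0 := by
  intro π hπ ψ hψ
  rw [Δ.F0] at hπ
  rw [Set.mem_singleton_iff] at hπ
  subst hπ
  rw [Set.mem_singleton_iff] at hψ
  subst hψ
  refine ⟨Δ.φ_nt, ?_, ?_⟩
  · rintro a ⟨C, hC, b, hab⟩
    rw [Δ.Rem0]
    exact Δ.φ_vars C hC (a, b) hab
  · intro a b h
    exact Δ.T.edge_cover a b ((Δ.primal a b).mpr h)

lemma St12.inv_step {ι : Type} {G : SimpleGraph V} (Δ : DerivSeq V ι G)
    (j : ℕ) (hjm : j < Δ.m)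
    (hInv : St12.Inv Δ j)
    (hEU : Δ.Rem j ⊆ Δ.E ∪ Δ.U)
    (hRemk : ∀ k : Fin Δ.m, (k : ℕ) < j → Δ.v k ∉ Δ.Rem j) :
    St12.Inv Δ (j + 1) := by
  by_cases hv : Δ.v ⟨j, hjm⟩ ∈ Δ.Rem j
  · by_cases hcond : ∀ w ∈ Δ.Rem j, Δ.D (Δ.v ⟨j, hjm⟩) w → w ≠ Δ.v ⟨j, hjm⟩ →
        w ∉ Δ.T.bag (Δ.T.forget (Δ.v ⟨j, hjm⟩))
    · rcases Finset.mem_union.1 (hEU hv) with hE | hU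
      · -- R2: resolution
        have hF : Δ.F (j + 1) =
            { π' | ∃ π ∈ Δ.F j, π' = (fun ψ => res ψ (Δ.v ⟨j, hjm⟩)) '' π } :=
          (Δ.stepR2 ⟨j, hjm⟩ hv hE hcond).1
        have hR : Δ.Rem (j + 1) = (Δ.Rem j).erase (Δ.v ⟨j, hjm⟩) :=
          (Δ.stepR2 ⟨j, hjm⟩ hv hE hcond).2
        have hbag := St12.bag_claim Δ ⟨j, hjm⟩ hInv hEU hRemk
        intro π' hπ' ψ' hψ'
        rw [hF] at hπ'
        obtain ⟨π, hπ, rfl⟩ := hπ'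
        obtain ⟨ψ, hψ, rfl⟩ := hψ'
        obtain ⟨hNT, hVars, hCov⟩ := hInv π hπ ψ hψ
        refine ⟨?_, ?_, ?_⟩
        · intro C hC
          rcases St12.mem_res_cases hC with ⟨h1, _, _⟩ | ⟨hnt, _⟩
          · exact hNT C h1
          · exact hnt
        · rintro a ⟨C, hC, b, hab⟩
          rw [hR]
          rcases St12.mem_res_cases hC with ⟨h1, hp, hn⟩ | ⟨_, C1, hC1, hx1, C2, hC2, hx2, rfl⟩
          · refine Finset.mem_erase.2 ⟨?_, hVars a ⟨C, h1, b, hab⟩⟩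
            rintro rfl
            cases b
            · exact hn hab
            · exact hp hab
          · rcases Finset.mem_union.1 hab with h | h
            · obtain ⟨hin, hne⟩ := St12.varIn_erase_pos hx1 (hNT C1 hC1) h
              exact Finset.mem_erase.2 ⟨hne, hVars a ⟨C1, hC1, hin⟩⟩
            · obtain ⟨hin, hne⟩ := St12.varIn_erase_neg hx2 (hNT C2 hC2) h
              exact Finset.mem_erase.2 ⟨hne, hVars a ⟨C2, hC2, hin⟩⟩
        · rintro a b ⟨hab, C, hC, ⟨ba, ha⟩, ⟨bb, hb⟩⟩
          rcases St12.mem_res_cases hC with ⟨h1, _, _⟩ | ⟨_, C1, hC1, hx1, C2, hC2, hx2, rfl⟩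
          · exact hCov a b ⟨hab, C, h1, ⟨ba, ha⟩, ⟨bb, hb⟩⟩
          · have key : ∀ c : V, ∀ bc : Bool,
                (c, bc) ∈ C1.erase (Δ.v ⟨j, hjm⟩, true) ∪ C2.erase (Δ.v ⟨j, hjm⟩, false) →
                (varIn c C1 ∧ c ≠ Δ.v ⟨j, hjm⟩) ∨ (varIn c C2 ∧ c ≠ Δ.v ⟨j, hjm⟩) := by
              intro c bc hmem
              rcases Finset.mem_union.1 hmem with h | h
              · exact Or.inl (St12.varIn_erase_pos hx1 (hNT C1 hC1) h)
              · exact Or.inr (St12.varIn_erase_neg hx2 (hNT C2 hC2) h)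
            rcases key a ba ha with ⟨ha1, hax⟩ | ⟨ha2, hax⟩ <;>
              rcases key b bb hb with ⟨hb1, hbx⟩ | ⟨hb2, hbx⟩
            · exact hCov a b ⟨hab, C1, hC1, ha1, hb1⟩
            · exact ⟨_, hbag π hπ ψ hψ a ⟨Ne.symm hax, C1, hC1, ⟨true, hx1⟩, ha1⟩,
                hbag π hπ ψ hψ b ⟨Ne.symm hbx, C2, hC2, ⟨false, hx2⟩, hb2⟩⟩
            · exact ⟨_, hbag π hπ ψ hψ a ⟨Ne.symm hax, C2, hC2, ⟨false, hx2⟩, ha2⟩,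
                hbag π hπ ψ hψ b ⟨Ne.symm hbx, C1, hC1, ⟨true, hx1⟩, hb1⟩⟩
            · exact hCov a b ⟨hab, C2, hC2, ha2, hb2⟩
      · -- R3: reduction
        have hF : Δ.F (j + 1) =
            { π' | ∃ π ∈ Δ.F j, π' = (fun ψ => red ψ (Δ.v ⟨j, hjm⟩)) '' π } :=
          (Δ.stepR3 ⟨j, hjm⟩ hv hU hcond).1
        have hR : Δ.Rem (j + 1) = (Δ.Rem j).erase (Δ.v ⟨j, hjm⟩) :=
          (Δ.stepR3 ⟨j, hjm⟩ hv hU hcond).2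
        intro π' hπ' ψ' hψ'
        rw [hF] at hπ'
        obtain ⟨π, hπ, rfl⟩ := hπ'
        obtain ⟨ψ, hψ, rfl⟩ := hψ'
        obtain ⟨hNT, hVars, hCov⟩ := hInv π hπ ψ hψ
        refine ⟨?_, ?_, ?_⟩
        · intro C hC
          obtain ⟨C0, hC0, rfl⟩ := Finset.mem_image.1 hC
          intro ht
          exact hNT C0 hC0
            (St12.tauto_mono ((Finset.erase_subset _ _).trans (Finset.erase_subset _ _)) ht)
        · rintro a ⟨C, hC, b, hab⟩
          obtain ⟨C0, hC0, rfl⟩ := Finset.mem_image.1 hC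
          rw [hR]
          rcases Finset.mem_erase.1 hab with ⟨hne2, hab1⟩
          rcases Finset.mem_erase.1 hab1 with ⟨hne1, hab0⟩
          refine Finset.mem_erase.2 ⟨?_, hVars a ⟨C0, hC0, b, hab0⟩⟩
          rintro rfl
          cases b
          · exact hne2 rfl
          · exact hne1 rfl
        · rintro a b ⟨hab, C, hC, ⟨ba, ha⟩, ⟨bb, hb⟩⟩
          obtain ⟨C0, hC0, rfl⟩ := Finset.mem_image.1 hC
          exact hCov a b ⟨hab, C0, hC0,
            ⟨ba, Finset.mem_of_mem_erase (Finset.mem_of_mem_erase ha)⟩,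
            ⟨bb, Finset.mem_of_mem_erase (Finset.mem_of_mem_erase hb)⟩⟩
    · -- R4: strategy extension
      have hF : Δ.F (j + 1) = ⋃ π ∈ Δ.F j,
          strext Δ.E Δ.U Δ.D ((Δ.Rem j).filter (fun w => Δ.D w (Δ.v ⟨j, hjm⟩))) π :=
        (Δ.stepR4 ⟨j, hjm⟩ hv hcond).1
      have hR : Δ.Rem (j + 1) = (Δ.Rem j).filter (fun w => ¬ Δ.D w (Δ.v ⟨j, hjm⟩)) :=
        (Δ.stepR4 ⟨j, hjm⟩ hv hcond).2
      intro π' hπ' ψ' hψ'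
      rw [hF] at hπ'
      simp only [Set.mem_iUnion] at hπ'
      obtain ⟨π, hπ, hmem⟩ := hπ'
      obtain ⟨τ, hτ, rfl⟩ := hmem
      obtain ⟨ψ, hψ, β, rfl⟩ := hψ'
      obtain ⟨hNT, hVars, hCov⟩ := hInv π hπ ψ hψ
      have hcl : ∀ C ∈ restrict ψ ((Δ.Rem j).filter (fun w => Δ.D w (Δ.v ⟨j, hjm⟩)))
          (combined Δ.E (τ ψ) β),
          ∃ C0 ∈ ψ, C = C0.filter
            (fun l => l.1 ∉ (Δ.Rem j).filter (fun w => Δ.D w (Δ.v ⟨j, hjm⟩))) := by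
        intro C hC
        obtain ⟨C0, hC0, rfl⟩ := Finset.mem_image.1 hC
        exact ⟨C0, (Finset.mem_filter.1 hC0).1, rfl⟩
      refine ⟨?_, ?_, ?_⟩
      · intro C hC
        obtain ⟨C0, hC0, rfl⟩ := hcl C hC
        intro ht
        exact hNT C0 hC0 (St12.tauto_mono (Finset.filter_subset _ _) ht)
      · rintro a ⟨C, hC, b, hab⟩
        obtain ⟨C0, hC0, rfl⟩ := hcl C hC
        rcases Finset.mem_filter.1 hab with ⟨hab0, hns⟩
        have haRem : a ∈ Δ.Rem j := hVars a ⟨C0, hC0, b, hab0⟩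
        rw [hR]
        refine Finset.mem_filter.2 ⟨haRem, ?_⟩
        intro hd
        exact hns (Finset.mem_filter.2 ⟨haRem, hd⟩)
      · rintro a b ⟨hab, C, hC, ⟨ba, ha⟩, ⟨bb, hb⟩⟩
        obtain ⟨C0, hC0, rfl⟩ := hcl C hC
        exact hCov a b ⟨hab, C0, hC0,
          ⟨ba, (Finset.mem_filter.1 ha).1⟩, ⟨bb, (Finset.mem_filter.1 hb).1⟩⟩
  · -- R1: copy
    have hF : Δ.F (j + 1) = Δ.F j := (Δ.stepR1 ⟨j, hjm⟩ hv).1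
    have hR : Δ.Rem (j + 1) = Δ.Rem j := (Δ.stepR1 ⟨j, hjm⟩ hv).2
    intro π' hπ' ψ' hψ'
    rw [hF] at hπ'
    obtain ⟨hNT, hVars, hCov⟩ := hInv π' hπ' ψ' hψ'
    exact ⟨hNT, fun a ha => by rw [hR]; exact hVars a ha, hCov⟩

lemma St12.inv_all {ι : Type} {G : SimpleGraph V} (Δ : DerivSeq V ι G) :
    ∀ j, j ≤ Δ.m → St12.Inv Δ j := by
  intro j
  induction j with
  | zero => intro _; exact St12.inv_zero Δ
  | succ j ih =>
    intro hj
    have hjm : j < Δ.m := hj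
    obtain ⟨hEU, hk⟩ := St12.rem_facts Δ j (Nat.le_of_lt hjm)
    exact St12.inv_step Δ j hjm (ih (Nat.le_of_lt hjm)) hEU hk

/-- in a derivation sequence along an elimination ordering agreeing
with a trunk-aligned tree decomposition, for each step `i` and each matrix `ψ`
occurring in some set of `F^{(i-1)}` (here: of `Δ.F i`, with `Δ.v i` the variable being
eliminated), every neighbor of `v_i` in the primal graph of `ψ` belongs to the bag
`χ(forget v_i)`. -/
theorem stmt12 {V ι : Type} {G : SimpleGraph V} (Δ : DerivSeq V ι G)
    (i : Fin Δ.m) (π : Set (CNF V)) (hπ : π ∈ Δ.F (i : ℕ))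
    (ψ : CNF V) (hψ : ψ ∈ π) (w : V) (hw : primalAdj ψ (Δ.v i) w) :
    w ∈ Δ.T.bag (Δ.T.forget (Δ.v i)) := by
  obtain ⟨hEU, hk⟩ := St12.rem_facts Δ (i : ℕ) (Nat.le_of_lt i.isLt)
  exact St12.bag_claim Δ i (St12.inv_all Δ (i : ℕ) (Nat.le_of_lt i.isLt)) hEU hk
    π hπ ψ hψ w hw
end
end
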